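/- Suppose the fixed point v of the Bellman operator Γ, restricted to Ω, is Lipschitz continuous with Lipschitz constant L_v. Let (X_k) be a sequence of finite node sets in Ω with fill distances h_k > 0, let C_σ, ρ > 0 be constants, and for each k let S_k be the Shepard operator built from the weight function w_k(ξ,x) = φ^{σ_k}(‖ξ − x‖₂) with shape parameter σ_k = C_σ/h_k, where the nonnegative shape function φ^{σ_k} vanishes for arguments r ≥ ρ/σ_k and satisfies Σ_{x_j ∈ X_k} w_k(x_j,x) > 0 for all x ∈ Ω. If ṽ_k denotes the unique fixed point of the Bellman–Shepard operator Γ̃_k = S_k ∘ Γ, then ‖v − ṽ_k‖_∞ ≤ (L_v ρ / (C_σ (1 − e^{−δ}))) · h_k on Ω; in particular ṽ_k → v uniformly as h_k → 0. -/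

import Mathlib

/-!
Let `M` be the supremum of `|v - ṽ_k|` on `Ω` and `r_k = ρ h_k / C_σ`. At a node `ξ`,
`|v ξ - Γ ṽ_k ξ| = |Γ v ξ - Γ ṽ_k ξ| ≤ e^{-δ} M` since `Γ` contracts with factor `e^{-δ}`.
At `x ∈ Ω` the Shepard weights only charge nodes within `r_k` of `x`, where `v` differs from
`v x` by at most `L_v r_k`; as `ṽ_k x = S_k (Γ ṽ_k) x` is a convex combination of the values
`Γ ṽ_k ξ`, this gives `M ≤ L_v r_k + e^{-δ} M`, i.e. `M ≤ L_v r_k / (1 - e^{-δ})`.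
-/

open Classical in
/-- The Kružkov-transformed Bellman operator. -/
noncomputable def bellman {s d : ℕ}
    (Om T : Set (EuclideanSpace ℝ (Fin s))) (U : Set (EuclideanSpace ℝ (Fin d)))
    (f : EuclideanSpace ℝ (Fin s) → EuclideanSpace ℝ (Fin d) → EuclideanSpace ℝ (Fin s))
    (c : EuclideanSpace ℝ (Fin s) → EuclideanSpace ℝ (Fin d) → ℝ)
    (v : EuclideanSpace ℝ (Fin s) → ℝ) :
    EuclideanSpace ℝ (Fin s) → ℝ :=
  fun x =>
    if x ∈ T then 1
    else if x ∈ Om then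
      sSup ((fun u => Real.exp (-c x u) * (if f x u ∈ T then 1 else v (f x u))) '' U)
    else 0

/-- The Shepard approximation operator. -/
noncomputable def shepard {s : ℕ} (n : ℕ) (nodes : Fin n → EuclideanSpace ℝ (Fin s))
    (w : EuclideanSpace ℝ (Fin s) → EuclideanSpace ℝ (Fin s) → ℝ)
    (v : EuclideanSpace ℝ (Fin s) → ℝ) :
    EuclideanSpace ℝ (Fin s) → ℝ :=
  fun x => ∑ i, v (nodes i) * (w (nodes i) x / ∑ j, w (nodes j) x)

open Finset

section Shepard

variable {s n : ℕ} {nodes : Fin n → EuclideanSpace ℝ (Fin s)}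
  {w : EuclideanSpace ℝ (Fin s) → EuclideanSpace ℝ (Fin s) → ℝ} {x : EuclideanSpace ℝ (Fin s)}

theorem abs_shepard_le (hw : ∀ i, 0 ≤ w (nodes i) x) (g : EuclideanSpace ℝ (Fin s) → ℝ) :
    |shepard n nodes w g x| ≤ ∑ i, |g (nodes i)| := by
  refine (abs_sum_le_sum_abs _ _).trans (sum_le_sum fun i _ => ?_)
  have hθ : w (nodes i) x / ∑ j, w (nodes j) x ≤ 1 :=
    div_le_one_of_le₀ (single_le_sum (fun j _ => hw j) (mem_univ i)) (sum_nonneg fun j _ => hw j)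
  rw [abs_mul, abs_of_nonneg (div_nonneg (hw i) (sum_nonneg fun j _ => hw j))]
  exact mul_le_of_le_one_right (abs_nonneg _) hθ

/-- `shepard` forms convex combinations of the node values. -/
theorem abs_sub_shepard_le (hw : ∀ i, 0 ≤ w (nodes i) x) (hpos : 0 < ∑ j, w (nodes j) x)
    {g : EuclideanSpace ℝ (Fin s) → ℝ} {a C : ℝ}
    (hC : ∀ i, w (nodes i) x ≠ 0 → |a - g (nodes i)| ≤ C) :
    |a - shepard n nodes w g x| ≤ C := by
  set θ : Fin n → ℝ := fun i => w (nodes i) x / ∑ j, w (nodes j) x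
  have hθ0 : ∀ i, 0 ≤ θ i := fun i => div_nonneg (hw i) hpos.le
  have hθ1 : ∑ i, θ i = 1 := by rw [← sum_div, div_self hpos.ne']
  have hterm : ∀ i, |a - g (nodes i)| * θ i ≤ C * θ i := by
    intro i
    by_cases hwi : w (nodes i) x = 0
    · simp [θ, hwi]
    · exact mul_le_mul_of_nonneg_right (hC i hwi) (hθ0 i)
  calc |a - shepard n nodes w g x| = |∑ i, (a - g (nodes i)) * θ i| := by
        simp only [shepard, sub_mul, sum_sub_distrib, ← mul_sum, hθ1, mul_one, θ]
    _ ≤ ∑ i, |a - g (nodes i)| * θ i := by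
        refine (abs_sum_le_sum_abs _ _).trans_eq (sum_congr rfl fun i _ => ?_)
        rw [abs_mul, abs_of_nonneg (hθ0 i)]
    _ ≤ ∑ i, C * θ i := sum_le_sum fun i _ => hterm i
    _ = C := by rw [← mul_sum, hθ1, mul_one]

end Shepard

theorem bddAbove_image_of_abs_le {α : Type*} {g : α → ℝ} {B : ℝ} (hg : ∀ x, |g x| ≤ B)
    (S : Set α) : BddAbove (g '' S) :=
  ⟨B, by rintro _ ⟨x, -, rfl⟩; exact (le_abs_self _).trans (hg x)⟩

theorem abs_sSup_image_sub_sSup_image_le {β : Type*} {U : Set β} (hU : U.Nonempty)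
    {F G : β → ℝ} (hF : BddAbove (F '' U)) (hG : BddAbove (G '' U)) {C : ℝ}
    (h : ∀ u ∈ U, |F u - G u| ≤ C) : |sSup (F '' U) - sSup (G '' U)| ≤ C := by
  rw [abs_sub_le_iff, sub_le_iff_le_add, sub_le_iff_le_add]
  constructor
  · refine csSup_le (hU.image F) ?_
    rintro _ ⟨u, hu, rfl⟩
    linarith [(abs_sub_le_iff.mp (h u hu)).1, le_csSup hG (Set.mem_image_of_mem G hu)]
  · refine csSup_le (hU.image G) ?_
    rintro _ ⟨u, hu, rfl⟩
    linarith [(abs_sub_le_iff.mp (h u hu)).2, le_csSup hF (Set.mem_image_of_mem F hu)]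

theorem le_div_one_sub_of_le_add_mul_sSup {α : Type*} {S : Set α} {e : α → ℝ}
    (hbdd : BddAbove (e '' S)) {a q : ℝ} (hq : q < 1)
    (h : ∀ x ∈ S, e x ≤ a + q * sSup (e '' S)) : ∀ x ∈ S, e x ≤ a / (1 - q) := by
  intro x hx
  have hex : e x ≤ sSup (e '' S) := le_csSup hbdd (Set.mem_image_of_mem e hx)
  have hM : sSup (e '' S) ≤ a + q * sSup (e '' S) :=
    csSup_le ⟨e x, Set.mem_image_of_mem e hx⟩ (by rintro _ ⟨y, hy, rfl⟩; exact h y hy)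
  rw [le_div_iff₀ (sub_pos.mpr hq)]
  nlinarith

theorem tendstoUniformlyOn_of_dist_le {ι α β : Type*} [PseudoMetricSpace β] {l : Filter ι}
    {F : ι → α → β} {f : α → β} {S : Set α} {b : ι → ℝ}
    (hF : ∀ k, ∀ x ∈ S, dist (f x) (F k x) ≤ b k) (hb : Filter.Tendsto b l (nhds 0)) :
    TendstoUniformlyOn F f l S := by
  rw [Metric.tendstoUniformlyOn_iff]
  intro ε hε
  filter_upwards [hb.eventually (gt_mem_nhds hε)] with k hk x hx
  exact (hF k x hx).trans_lt hk

section Bellman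

variable {s d : ℕ} {Om T : Set (EuclideanSpace ℝ (Fin s))} {U : Set (EuclideanSpace ℝ (Fin d))}
  {f : EuclideanSpace ℝ (Fin s) → EuclideanSpace ℝ (Fin d) → EuclideanSpace ℝ (Fin s)}
  {c : EuclideanSpace ℝ (Fin s) → EuclideanSpace ℝ (Fin d) → ℝ} {δ : ℝ}

open Classical in
/-- The quantity `e^{-c(x,u)} v̄(f(x,u))` maximised over `u ∈ U` by `bellman`. -/
noncomputable def bellmanGain (T : Set (EuclideanSpace ℝ (Fin s)))
    (f : EuclideanSpace ℝ (Fin s) → EuclideanSpace ℝ (Fin d) → EuclideanSpace ℝ (Fin s))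
    (c : EuclideanSpace ℝ (Fin s) → EuclideanSpace ℝ (Fin d) → ℝ)
    (v : EuclideanSpace ℝ (Fin s) → ℝ) (x : EuclideanSpace ℝ (Fin s))
    (u : EuclideanSpace ℝ (Fin d)) : ℝ :=
  Real.exp (-c x u) * (if f x u ∈ T then 1 else v (f x u))

theorem bellman_of_mem_diff {x : EuclideanSpace ℝ (Fin s)} (hx : x ∈ Om \ T)
    (v : EuclideanSpace ℝ (Fin s) → ℝ) :
    bellman Om T U f c v x = sSup (bellmanGain T f c v x '' U) := by
  simp only [bellman, if_neg hx.2, if_pos hx.1]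
  rfl

theorem bellman_of_mem {x : EuclideanSpace ℝ (Fin s)} (hx : x ∈ T)
    (v : EuclideanSpace ℝ (Fin s) → ℝ) : bellman Om T U f c v x = 1 := by
  simp [bellman, hx]

theorem bddAbove_bellmanGain (hδ : 0 < δ) (hcδ : ∀ x ∈ Om \ T, ∀ u ∈ U, δ ≤ c x u)
    (hfm : ∀ x ∈ Om, ∀ u ∈ U, f x u ∈ Om) {v : EuclideanSpace ℝ (Fin s) → ℝ}
    (hv : BddAbove (v '' Om)) {x : EuclideanSpace ℝ (Fin s)} (hx : x ∈ Om \ T) :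
    BddAbove (bellmanGain T f c v x '' U) := by
  obtain ⟨B, hB⟩ := hv
  refine ⟨max 1 B, ?_⟩
  rintro _ ⟨u, hu, rfl⟩
  have hexp : Real.exp (-c x u) ≤ 1 :=
    Real.exp_le_one_iff.mpr (by linarith [hcδ x hx u hu])
  unfold bellmanGain
  split_ifs
  · simpa using hexp.trans (le_max_left _ _)
  · calc Real.exp (-c x u) * v (f x u) ≤ Real.exp (-c x u) * max 1 B :=
          mul_le_mul_of_nonneg_left ((hB (Set.mem_image_of_mem v (hfm x hx.1 u hu))).trans
            (le_max_right _ _)) (Real.exp_pos _).le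
      _ ≤ max 1 B := mul_le_of_le_one_left (zero_le_one.trans (le_max_left _ _)) hexp

theorem abs_bellmanGain_sub_le (hcδ : ∀ x ∈ Om \ T, ∀ u ∈ U, δ ≤ c x u)
    (hfm : ∀ x ∈ Om, ∀ u ∈ U, f x u ∈ Om) {v w : EuclideanSpace ℝ (Fin s) → ℝ} {M : ℝ}
    (hM0 : 0 ≤ M) (hM : ∀ z ∈ Om, |v z - w z| ≤ M) {x : EuclideanSpace ℝ (Fin s)}
    (hx : x ∈ Om \ T) {u : EuclideanSpace ℝ (Fin d)} (hu : u ∈ U) :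
    |bellmanGain T f c v x u - bellmanGain T f c w x u| ≤ Real.exp (-δ) * M := by
  unfold bellmanGain
  split_ifs
  · simpa using mul_nonneg (Real.exp_pos (-δ)).le hM0
  · rw [← mul_sub, abs_mul, Real.abs_exp]
    exact mul_le_mul (Real.exp_le_exp.mpr (by linarith [hcδ x hx u hu]))
      (hM _ (hfm x hx.1 u hu)) (abs_nonneg _) (Real.exp_pos _).le

theorem abs_bellman_sub_le (hδ : 0 < δ) (hcδ : ∀ x ∈ Om \ T, ∀ u ∈ U, δ ≤ c x u)
    (hUne : U.Nonempty) (hfm : ∀ x ∈ Om, ∀ u ∈ U, f x u ∈ Om)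
    {v w : EuclideanSpace ℝ (Fin s) → ℝ} (hv : BddAbove (v '' Om)) (hw : BddAbove (w '' Om))
    {M : ℝ} (hM0 : 0 ≤ M) (hM : ∀ z ∈ Om, |v z - w z| ≤ M) {x : EuclideanSpace ℝ (Fin s)}
    (hx : x ∈ Om) :
    |bellman Om T U f c v x - bellman Om T U f c w x| ≤ Real.exp (-δ) * M := by
  by_cases hxT : x ∈ T
  · simpa [bellman_of_mem hxT] using mul_nonneg (Real.exp_pos (-δ)).le hM0
  · have hxd : x ∈ Om \ T := ⟨hx, hxT⟩
    rw [bellman_of_mem_diff hxd, bellman_of_mem_diff hxd]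
    exact abs_sSup_image_sub_sSup_image_le hUne (bddAbove_bellmanGain hδ hcδ hfm hv hxd)
      (bddAbove_bellmanGain hδ hcδ hfm hw hxd)
      fun u hu => abs_bellmanGain_sub_le hcδ hfm hM0 hM hxd hu

theorem abs_sub_le_of_shepard_bellman_eq (hδ : 0 < δ) (hcδ : ∀ x ∈ Om \ T, ∀ u ∈ U, δ ≤ c x u)
    (hUne : U.Nonempty) (hfm : ∀ x ∈ Om, ∀ u ∈ U, f x u ∈ Om)
    {v : EuclideanSpace ℝ (Fin s) → ℝ} (hvbd : ∃ M, ∀ x, |v x| ≤ M)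
    (hvfix : bellman Om T U f c v = v) {L : ℝ} (hL : 0 ≤ L)
    (hvlip : ∀ x ∈ Om, ∀ y ∈ Om, |v x - v y| ≤ L * ‖x - y‖)
    {n : ℕ} {nodes : Fin n → EuclideanSpace ℝ (Fin s)} (hnodes : ∀ i, nodes i ∈ Om)
    {φ : ℝ → ℝ} (hφ0 : ∀ r, 0 ≤ φ r) {r : ℝ} (hφsupp : ∀ t, r ≤ t → φ t = 0)
    (hφpos : ∀ x ∈ Om, 0 < ∑ j, φ ‖nodes j - x‖) {vt : EuclideanSpace ℝ (Fin s) → ℝ}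
    (hvtfix : shepard n nodes (fun ξ y => φ ‖ξ - y‖) (bellman Om T U f c vt) = vt) :
    ∀ x ∈ Om, |v x - vt x| ≤ L * r / (1 - Real.exp (-δ)) := by
  obtain ⟨Bv, hBv⟩ := hvbd
  obtain ⟨B, hB⟩ : ∃ B, ∀ x, |vt x| ≤ B :=
    ⟨_, fun x => hvtfix ▸ abs_shepard_le (fun i => hφ0 _) _⟩
  have hEbdd : BddAbove ((fun x => |v x - vt x|) '' Om) :=
    bddAbove_image_of_abs_le (fun x => (abs_abs _).trans_le
      ((abs_sub _ _).trans (add_le_add (hBv x) (hB x)))) Om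
  set M := sSup ((fun x => |v x - vt x|) '' Om)
  have hM0 : 0 ≤ M := Real.sSup_nonneg (by rintro _ ⟨x, -, rfl⟩; exact abs_nonneg _)
  have hM : ∀ z ∈ Om, |v z - vt z| ≤ M := fun z hz => le_csSup hEbdd ⟨z, hz, rfl⟩
  refine le_div_one_sub_of_le_add_mul_sSup hEbdd (Real.exp_lt_one_iff.mpr (by linarith))
    fun x hx => ?_
  show |v x - vt x| ≤ L * r + Real.exp (-δ) * M
  rw [← hvtfix]
  refine abs_sub_shepard_le (fun i => hφ0 _) (hφpos x hx) fun i hi => ?_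
  have hnear : ‖x - nodes i‖ ≤ r := by
    rw [norm_sub_rev]
    by_contra hfar
    exact hi (hφsupp _ (not_le.mp hfar).le)
  have hcontr := abs_bellman_sub_le hδ hcδ hUne hfm (bddAbove_image_of_abs_le hBv Om)
    (bddAbove_image_of_abs_le hB Om) hM0 hM (hnodes i)
  rw [hvfix] at hcontr
  calc |v x - bellman Om T U f c vt (nodes i)|
      ≤ |v x - v (nodes i)| + |v (nodes i) - bellman Om T U f c vt (nodes i)| :=
        abs_sub_le _ _ _
    _ ≤ L * r + Real.exp (-δ) * M :=
        add_le_add ((hvlip x hx _ (hnodes i)).trans (mul_le_mul_of_nonneg_left hnear hL)) hcontr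

end Bellman

theorem bellman_shepard_convergence_general {s d : ℕ}
    (Om T : Set (EuclideanSpace ℝ (Fin s))) (U : Set (EuclideanSpace ℝ (Fin d)))
    (hUne : U.Nonempty)
    (f : EuclideanSpace ℝ (Fin s) → EuclideanSpace ℝ (Fin d) → EuclideanSpace ℝ (Fin s))
    (hfm : ∀ x ∈ Om, ∀ u ∈ U, f x u ∈ Om)
    (c : EuclideanSpace ℝ (Fin s) → EuclideanSpace ℝ (Fin d) → ℝ)
    (δ : ℝ) (hδ : 0 < δ)
    (hcδ : ∀ x ∈ Om \ T, ∀ u ∈ U, δ ≤ c x u)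
    -- the fixed point v of Γ, bounded and Lipschitz on Ω with constant L_v
    (v : EuclideanSpace ℝ (Fin s) → ℝ) (hvbd : ∃ M, ∀ x, |v x| ≤ M)
    (hvfix : bellman Om T U f c v = v)
    (Lv : ℝ) (hLv : 0 ≤ Lv)
    (hvlip : ∀ x ∈ Om, ∀ y ∈ Om, |v x - v y| ≤ Lv * ‖x - y‖)
    -- the sequence of node sets X_k with fill distances h_k and shape parameters
    -- σ_k = C_σ / h_k
    (Cσ ρ : ℝ) (hCσ : 0 < Cσ)
    (n : ℕ → ℕ)
    (nodes : ∀ k, Fin (n k) → EuclideanSpace ℝ (Fin s))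
    (hnodes : ∀ k i, nodes k i ∈ Om)
    (h : ℕ → ℝ) (hh : ∀ k, 0 < h k)
    -- the shape functions φ_k = φ^{σ_k}, nonnegative and vanishing for r ≥ ρ/σ_k
    (φ : ℕ → ℝ → ℝ) (hφ0 : ∀ k r, 0 ≤ φ k r)
    (hφsupp : ∀ k r, ρ / (Cσ / h k) ≤ r → φ k r = 0)
    (hφpos : ∀ k, ∀ x ∈ Om, 0 < ∑ j, φ k ‖nodes k j - x‖)
    -- the fixed points ṽ_k of the Bellman-Shepard operators Γ̃_k = S_k ∘ Γ
    (vt : ℕ → EuclideanSpace ℝ (Fin s) → ℝ)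
    (hvtfix : ∀ k,
      shepard (n k) (nodes k) (fun ξ y => φ k ‖ξ - y‖) (bellman Om T U f c (vt k)) = vt k) :
    (∀ k, ∀ x ∈ Om, |v x - vt k x| ≤ Lv * ρ / (Cσ * (1 - Real.exp (-δ))) * h k) ∧
    (Filter.Tendsto h Filter.atTop (nhds 0) →
      TendstoUniformlyOn (fun k x => vt k x) v Filter.atTop Om) := by
  have hbound : ∀ k, ∀ x ∈ Om, |v x - vt k x| ≤ Lv * ρ / (Cσ * (1 - Real.exp (-δ))) * h k := by
    intro k x hx
    have hq : 1 - Real.exp (-δ) ≠ 0 := (sub_pos.mpr (Real.exp_lt_one_iff.mpr (by linarith))).ne'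
    convert abs_sub_le_of_shepard_bellman_eq hδ hcδ hUne hfm hvbd hvfix hLv hvlip (hnodes k)
      (hφ0 k) (hφsupp k) (hφpos k) (hvtfix k) x hx using 1
    field_simp [hCσ.ne', (hh k).ne']
  refine ⟨hbound, fun hh0 => tendstoUniformlyOn_of_dist_le
    (fun k x hx => (Real.dist_eq _ _).trans_le (hbound k x hx)) ?_⟩
  simpa using hh0.const_mul (Lv * ρ / (Cσ * (1 - Real.exp (-δ))))

/-- convergence of the fixed points `ṽ_k` of the Bellman–Shepard
operators `Γ̃_k = S_k ∘ Γ` to the fixed point `v` of the Bellman operator for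
decreasing fill distance: `‖v - ṽ_k‖_∞ ≤ L_v ρ / (C_σ (1 - e^{-δ})) · h_k` on `Ω`,
and in particular `ṽ_k → v` uniformly on `Ω` as `h_k → 0`. -/
theorem bellman_shepard_convergence {s d : ℕ}
    (Om T : Set (EuclideanSpace ℝ (Fin s))) (U : Set (EuclideanSpace ℝ (Fin d)))
    (hOm : IsCompact Om) (hOmne : Om.Nonempty) (hU : IsCompact U) (hUne : U.Nonempty)
    (hT : IsCompact T) (hTOm : T ⊆ Om)
    (f : EuclideanSpace ℝ (Fin s) → EuclideanSpace ℝ (Fin d) → EuclideanSpace ℝ (Fin s))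
    (hf : ContinuousOn (fun p => f p.1 p.2) (Om ×ˢ U))
    (hfm : ∀ x ∈ Om, ∀ u ∈ U, f x u ∈ Om)
    (c : EuclideanSpace ℝ (Fin s) → EuclideanSpace ℝ (Fin d) → ℝ)
    (hc : ContinuousOn (fun p => c p.1 p.2) (Om ×ˢ U))
    (hc0 : ∀ x ∈ Om, ∀ u ∈ U, 0 ≤ c x u)
    (δ : ℝ) (hδ : 0 < δ)
    (hcδ : ∀ x ∈ Om \ T, ∀ u ∈ U, δ ≤ c x u)
    -- the fixed point v of Γ, bounded and Lipschitz on Ω with constant L_v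
    (v : EuclideanSpace ℝ (Fin s) → ℝ) (hvbd : ∃ M, ∀ x, |v x| ≤ M)
    (hvfix : bellman Om T U f c v = v)
    (Lv : ℝ) (hLv : 0 ≤ Lv)
    (hvlip : ∀ x ∈ Om, ∀ y ∈ Om, |v x - v y| ≤ Lv * ‖x - y‖)
    -- the sequence of node sets X_k with fill distances h_k and shape parameters
    -- σ_k = C_σ / h_k
    (Cσ ρ : ℝ) (hCσ : 0 < Cσ) (hρ : 0 < ρ)
    (n : ℕ → ℕ) (hn : ∀ k, 0 < n k)
    (nodes : ∀ k, Fin (n k) → EuclideanSpace ℝ (Fin s))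
    (hnodes : ∀ k i, nodes k i ∈ Om)
    (h : ℕ → ℝ) (hh : ∀ k, 0 < h k)
    (hfill : ∀ k, h k = ⨆ x : Om, ⨅ i, dist (x : EuclideanSpace ℝ (Fin s)) (nodes k i))
    -- the shape functions φ_k = φ^{σ_k}, nonnegative and vanishing for r ≥ ρ/σ_k
    (φ : ℕ → ℝ → ℝ) (hφ0 : ∀ k r, 0 ≤ φ k r)
    (hφsupp : ∀ k r, ρ / (Cσ / h k) ≤ r → φ k r = 0)
    (hφpos : ∀ k, ∀ x ∈ Om, 0 < ∑ j, φ k ‖nodes k j - x‖)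
    -- the fixed points ṽ_k of the Bellman-Shepard operators Γ̃_k = S_k ∘ Γ
    (vt : ℕ → EuclideanSpace ℝ (Fin s) → ℝ)
    (hvtfix : ∀ k,
      shepard (n k) (nodes k) (fun ξ y => φ k ‖ξ - y‖) (bellman Om T U f c (vt k)) = vt k) :
    (∀ k, ∀ x ∈ Om, |v x - vt k x| ≤ Lv * ρ / (Cσ * (1 - Real.exp (-δ))) * h k) ∧
    (Filter.Tendsto h Filter.atTop (nhds 0) →
      TendstoUniformlyOn (fun k x => vt k x) v Filter.atTop Om) :=
  bellman_shepard_convergence_general Om T U hUne f hfm c δ hδ hcδ v hvbd hvfix Lv hLv hvlip Cσ ρ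
    hCσ n nodes hnodes h hh φ hφ0 hφsupp hφpos vt hvtfix
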